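/- arXiv:1803.06145 — 3 statements merged into one kernel-verified Lean document; each statement's English description precedes it below -/
import Mathlib

section
/- Let (X_n)_{n≥0} be a Markov chain absorbed at a cemetery state ∂ at time τ_∂, satisfying: (A1) there exist n₀ ∈ ℕ, c₁ > 0 and a probability measure ν on the survival set E such that P_x(X_{n₀} ∈ · | τ_∂ > n₀) ≥ c₁ ν for all x ∈ E; (A2) there exists c₂ > 0 such that P_ν(τ_∂ > n) ≥ c₂ P_x(τ_∂ > n) for all x ∈ E and n ∈ ℕ. Then for any two initial distributions μ₁, μ₂ on E and all n ≥ n₀: ‖P_{μ₁}(X_n ∈ · | τ_∂ > n) − P_{μ₂}(X_n ∈ · | τ_∂ > n)‖_TV ≤ 2(1 − c₁c₂)^{⌊n/n₀⌋}. -/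
/-!
Coupling of unnormalised measures. Start at time `n % n₀`, with both initial laws scaled so that
their survival mass up to time `n` is `1`. Over each block of `n₀` steps, (A1) shows that both
pushed-forward measures dominate `c₁ e ν`, where `e` is the smaller of their masses surviving the
block; remove this common part from both. By (A2) the removed part carries at least a fraction
`c₁ c₂` of the survival mass up to time `n`, and what is left of it is the same for both measures.
After `n / n₀` blocks the two leftovers therefore have mass at most `(1 - c₁ c₂) ^ (n / n₀)` on
the survival set, and the two conditioned laws differ by at most this much on every set.
-/

open MeasureTheory
open scoped ENNReal

namespace MeasureTheory.Measure

variable {α β : Type*} [MeasurableSpace α] [MeasurableSpace β]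

lemma aemeasurable_of_bind_ne_zero {μ : Measure α} {f : α → Measure β} (h : μ.bind f ≠ 0) :
    AEMeasurable f μ := by
  contrapose! h
  rw [Measure.bind, map_of_not_aemeasurable h, join_zero]

lemma dirac_bind' [MeasurableSingletonClass α] (f : α → Measure β) (a : α) :
    (dirac a).bind f = f a := by
  ext s hs
  rw [bind_apply hs aemeasurable_dirac, lintegral_dirac]

lemma add_bind {μ ν : Measure α} {f : α → Measure β} (hf : AEMeasurable f (μ + ν)) :
    (μ + ν).bind f = μ.bind f + ν.bind f := by
  ext s hs
  rw [add_apply, bind_apply hs hf, bind_apply hs (hf.mono_measure (Measure.le_add_right le_rfl)),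
    bind_apply hs (hf.mono_measure (Measure.le_add_left le_rfl)), lintegral_add_measure]

lemma smul_le_bind_of_minorization {μ : Measure α} {κ : α → Measure β} (hκ : AEMeasurable κ μ)
    {ν : Measure β} {F : Set β} (hF : MeasurableSet F) {c : ℝ≥0∞}
    (h : ∀ x B, MeasurableSet B → c * ν B * κ x F ≤ κ x B) :
    (c * (μ.bind κ) F) • ν ≤ μ.bind κ := by
  rw [Measure.le_iff]
  intro B hB
  rw [smul_apply, smul_eq_mul, bind_apply hF hκ, bind_apply hB hκ, mul_right_comm,
    ← lintegral_const_mul'' (f := fun x => κ x F) _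
      ((measurable_coe hF).comp_aemeasurable hκ)]
  exact lintegral_mono fun x => h x B hB

lemma const_mul_bind_apply_le {π : Measure α} {κ : α → Measure β} (hκ : AEMeasurable κ π)
    {E : Set α} (hE : MeasurableSet E) {F : Set β} (hF : MeasurableSet F) {c t : ℝ≥0∞}
    (h_mem : ∀ x ∈ E, c * κ x F ≤ t) (h_notMem : ∀ x ∉ E, κ x F = 0) :
    c * (π.bind κ) F ≤ t * π E := by
  rw [bind_apply hF hκ, ← lintegral_const_mul'' (f := fun x => κ x F) _
      ((measurable_coe hF).comp_aemeasurable hκ),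
    ← lintegral_indicator_const hE]
  refine lintegral_mono fun x => ?_
  by_cases hx : x ∈ E
  · simpa [hx] using h_mem x hx
  · simp [hx, h_notMem x hx]

end MeasureTheory.Measure

namespace ENNReal

lemma le_one_sub_mul_of_eq_add {W a b p : ℝ≥0∞} (h : W = a + b) (hp : p * W ≤ a)
    (hW : W ≠ ⊤) : b ≤ (1 - p) * W := by
  have ha : a ≠ ⊤ := ne_top_of_le_ne_top hW (h ▸ le_self_add)
  calc b = W - a := ENNReal.eq_sub_of_add_eq ha (by rw [add_comm, h])
    _ ≤ W - p * W := tsub_le_tsub_left hp W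
    _ = (1 - p) * W := by rw [ENNReal.sub_mul (fun _ _ => hW), one_mul]

lemma abs_toReal_sub_le_of_eq_add {x₁ x₂ r b₁ b₂ g : ℝ≥0∞} (h₁ : x₁ = r + b₁)
    (h₂ : x₂ = r + b₂) (hx₁ : x₁ ≠ ⊤) (hb₁ : b₁ ≤ g) (hb₂ : b₂ ≤ g) (hg : g ≠ ⊤) :
    |x₁.toReal - x₂.toReal| ≤ g.toReal := by
  have hr : r ≠ ⊤ := ne_top_of_le_ne_top hx₁ (h₁ ▸ le_self_add)
  have hb₁' := toReal_mono hg hb₁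
  have hb₂' := toReal_mono hg hb₂
  rw [h₁, h₂, toReal_add hr (ne_top_of_le_ne_top hg hb₁),
    toReal_add hr (ne_top_of_le_ne_top hg hb₂), abs_sub_le_iff]
  constructor <;> linarith [toReal_nonneg (a := b₁), toReal_nonneg (a := b₂)]

end ENNReal

/-- Measurability of the kernels is only required a.e. against finite measures, since the one-step
kernel of the chain need not be measurable (see `aemeasurable_of_survival`). -/
structure IsMarkovSemigroup {S : Type*} [MeasurableSpace S] (P : ℕ → S → Measure S) : Prop where
  zero : ∀ x, P 0 x = Measure.dirac x
  isProbabilityMeasure : ∀ n x, IsProbabilityMeasure (P n x)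
  aemeasurable : ∀ n (σ : Measure S) [IsFiniteMeasure σ], AEMeasurable (P n) σ
  add : ∀ m n x, P (m + n) x = (P m x).bind (P n)

namespace IsMarkovSemigroup

variable {S : Type*} [MeasurableSpace S] {P : ℕ → S → Measure S}

lemma bind_apply_univ (hP : IsMarkovSemigroup P) (σ : Measure S) [IsFiniteMeasure σ] (n : ℕ) :
    (σ.bind (P n)) Set.univ = σ Set.univ := by
  rw [Measure.bind_apply MeasurableSet.univ (hP.aemeasurable n σ)]
  simp [(hP.isProbabilityMeasure n _).measure_univ]

lemma isFiniteMeasure_bind (hP : IsMarkovSemigroup P) (σ : Measure S) [IsFiniteMeasure σ]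
    (n : ℕ) : IsFiniteMeasure (σ.bind (P n)) :=
  ⟨by rw [hP.bind_apply_univ]; exact measure_lt_top σ _⟩

lemma bind_zero (hP : IsMarkovSemigroup P) (σ : Measure S) : σ.bind (P 0) = σ := by
  rw [funext hP.zero, Measure.bind_dirac]

lemma bind_add (hP : IsMarkovSemigroup P) (σ : Measure S) [IsFiniteMeasure σ] (m n : ℕ) :
    σ.bind (P (m + n)) = (σ.bind (P m)).bind (P n) := by
  have := hP.isFiniteMeasure_bind σ m
  rw [Measure.bind_bind (hP.aemeasurable m σ) (hP.aemeasurable n _), funext (hP.add m n)]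

end IsMarkovSemigroup

section Conditions

variable {S : Type*} [MeasurableSpace S]

/-- Condition (A1), multiplied out by the survival probability `P n₀ x E`. -/
def Minorization (P : ℕ → S → Measure S) (E : Set S) (ν : Measure S) (c : ℝ≥0∞) (n₀ : ℕ) :
    Prop :=
  ∀ x ∈ E, ∀ B, MeasurableSet B → c * ν B * P n₀ x E ≤ P n₀ x (B ∩ E)

def SurvivalComparison (P : ℕ → S → Measure S) (E : Set S) (ν : Measure S) (c : ℝ≥0∞) : Prop :=
  ∀ x ∈ E, ∀ n, c * P n x E ≤ (ν.bind (P n)) E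

end Conditions

section Construction

variable {S : Type*} [MeasurableSpace S] [MeasurableSingletonClass S]

open ProbabilityTheory in
/-- A bind along a map that is not a.e.-measurable is `0` by convention, so positive survival mass
forces a.e.-measurability on `{cem}ᶜ`; on `{cem}` the measure is a multiple of a Dirac mass. -/
lemma aemeasurable_of_survival {cem : S} {P : S → Measure S}
    (hsurv : ∀ μ : Measure S, IsProbabilityMeasure μ → μ {cem} = 0 → 0 < (μ.bind P) {cem}ᶜ)
    (σ : Measure S) [IsFiniteMeasure σ] : AEMeasurable P σ := by
  rw [← Measure.restrict_add_restrict_compl (μ := σ) (measurableSet_singleton cem)]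
  refine AEMeasurable.add_measure ?_ ?_
  · rw [Measure.restrict_singleton]
    exact aemeasurable_dirac.smul_measure _
  · rcases eq_or_ne (σ {cem}ᶜ) 0 with h | h
    · rw [Measure.restrict_eq_zero.2 h]
      exact aemeasurable_zero_measure
    have hcond := cond_isProbabilityMeasure (s := {cem}ᶜ) h
    have hpos := hsurv _ hcond (by simp [cond_apply (measurableSet_singleton cem).compl])
    have hne : σ[|{cem}ᶜ].bind P ≠ 0 := fun h0 => by simp [h0] at hpos
    exact (aemeasurable_smul_measure_iff (ENNReal.inv_ne_zero.2 (measure_ne_top σ _))).1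
      (Measure.aemeasurable_of_bind_ne_zero hne)

lemma isMarkovSemigroup_of_survival {cem : S} (K : S → Measure S)
    [∀ x, IsProbabilityMeasure (K x)] (law : ℕ → S → Measure S)
    (hlaw0 : ∀ x, law 0 x = Measure.dirac x)
    (hlawS : ∀ n x, law (n + 1) x = (law n x).bind K)
    (hsurv : ∀ (n : ℕ) (μ : Measure S), IsProbabilityMeasure μ → μ {cem} = 0 →
      0 < (μ.bind (law n)) {cem}ᶜ) :
    IsMarkovSemigroup law := by
  have hae (n : ℕ) (σ : Measure S) [IsFiniteMeasure σ] : AEMeasurable (law n) σ :=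
    aemeasurable_of_survival (hsurv n) σ
  have hK : K = law 1 := funext fun x => by rw [hlawS, hlaw0, Measure.dirac_bind']
  have hprob (n : ℕ) (x : S) : IsProbabilityMeasure (law n x) := by
    induction n generalizing x with
    | zero => rw [hlaw0]; infer_instance
    | succ n ih =>
      rw [hlawS]
      exact isProbabilityMeasure_bind (hK ▸ hae 1 _) (ae_of_all _ inferInstance)
  refine ⟨hlaw0, hprob, hae, fun m n x => ?_⟩
  induction n with
  | zero => rw [add_zero, funext hlaw0, Measure.bind_dirac]
  | succ n ih =>
    rw [← add_assoc, hlawS, ih, Measure.bind_bind (hae n _) (ih ▸ hK ▸ hae 1 _)]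
    exact congrArg _ (funext fun y => (hlawS n y).symm)

lemma eq_dirac_of_absorbing {cem : S} (K : S → Measure S) (law : ℕ → S → Measure S)
    (hlaw0 : ∀ x, law 0 x = Measure.dirac x)
    (hlawS : ∀ n x, law (n + 1) x = (law n x).bind K)
    (habs : K cem = Measure.dirac cem) (n : ℕ) :
    law n cem = Measure.dirac cem := by
  induction n with
  | zero => exact hlaw0 cem
  | succ n ih => rw [hlawS, ih, Measure.dirac_bind', habs]

end Construction

namespace IsMarkovSemigroup

variable {S : Type*} [MeasurableSpace S] {P : ℕ → S → Measure S} {E : Set S}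
  {ν : Measure S} {c₁ c₂ : ℝ≥0∞} {n₀ : ℕ}

lemma mul_bind_add_apply_le (hP : IsMarkovSemigroup P) (hE : MeasurableSet E)
    (hPE : ∀ n x, x ∉ E → P n x E = 0) {m : ℕ} {t : ℝ≥0∞} (ht : ∀ x ∈ E, c₂ * P m x E ≤ t)
    (β : Measure S) [IsFiniteMeasure β] : c₂ * (β.bind (P (n₀ + m))) E ≤ t * (β.bind (P n₀)) E := by
  have := hP.isFiniteMeasure_bind β n₀
  rw [hP.bind_add]
  exact Measure.const_mul_bind_apply_le (hP.aemeasurable m _) hE hE ht (hPE m)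

lemma smul_le_bind_of_minorization (hP : IsMarkovSemigroup P) (hE : MeasurableSet E)
    (hPE : ∀ n x, x ∉ E → P n x E = 0) (hA1 : Minorization P E ν c₁ n₀)
    (β : Measure S) [IsFiniteMeasure β] :
    (c₁ * (β.bind (P n₀)) E) • ν ≤ β.bind (P n₀) := by
  refine Measure.smul_le_bind_of_minorization (hP.aemeasurable n₀ β) hE fun x B hB => ?_
  by_cases hx : x ∈ E
  · exact (hA1 x hx B hB).trans (measure_mono Set.inter_subset_left)
  · simp [hPE n₀ x hx]

lemma bind_eq_add_of_eq_add (hP : IsMarkovSemigroup P) {π ρ β : Measure S} [IsFiniteMeasure π]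
    (h : π = ρ + β) (n : ℕ) : π.bind (P n) = ρ.bind (P n) + β.bind (P n) := by
  rw [h, Measure.add_bind (h ▸ hP.aemeasurable n π)]

lemma exists_coupling_step (hP : IsMarkovSemigroup P) (hE : MeasurableSet E)
    (hPE : ∀ n x, x ∉ E → P n x E = 0) [IsFiniteMeasure ν]
    (hA1 : Minorization P E ν c₁ n₀) (hA2 : SurvivalComparison P E ν c₂)
    (m : ℕ) (β₁ β₂ : Measure S) [IsFiniteMeasure β₁] [IsFiniteMeasure β₂]
    (hβ : (β₁.bind (P (n₀ + m))) E = (β₂.bind (P (n₀ + m))) E) :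
    ∃ ρ β₁' β₂' : Measure S, IsFiniteMeasure β₁' ∧ IsFiniteMeasure β₂' ∧
      β₁.bind (P n₀) = ρ + β₁' ∧ β₂.bind (P n₀) = ρ + β₂' ∧
      (β₁'.bind (P m)) E = (β₂'.bind (P m)) E ∧
      (β₁'.bind (P m)) E ≤ (1 - c₁ * c₂) * (β₁.bind (P (n₀ + m))) E := by
  set e := min ((β₁.bind (P n₀)) E) ((β₂.bind (P n₀)) E)
  set t := (ν.bind (P m)) E
  have hρ (β : Measure S) [IsFiniteMeasure β] (he : e ≤ (β.bind (P n₀)) E) :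
      (c₁ * e) • ν ≤ β.bind (P n₀) :=
    le_trans (by gcongr) (hP.smul_le_bind_of_minorization hE hPE hA1 β)
  have := hP.isFiniteMeasure_bind β₁ n₀
  have := hP.isFiniteMeasure_bind β₂ n₀
  have := hP.isFiniteMeasure_bind β₁ (n₀ + m)
  have : IsFiniteMeasure ((c₁ * e) • ν) := isFiniteMeasure_of_le _ (hρ β₁ (min_le_left _ _))
  have h₁ := (Measure.sub_add_cancel_of_le (hρ β₁ (min_le_left _ _))).symm.trans (add_comm _ _)
  have h₂ := (Measure.sub_add_cancel_of_le (hρ β₂ (min_le_right _ _))).symm.trans (add_comm _ _)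
  have hmass (β β' : Measure S) [IsFiniteMeasure β] (h : β.bind (P n₀) = (c₁ * e) • ν + β') :
      (β.bind (P (n₀ + m))) E = c₁ * e * t + (β'.bind (P m)) E := by
    have := hP.isFiniteMeasure_bind β n₀
    rw [hP.bind_add, hP.bind_eq_add_of_eq_add h, Measure.add_apply, Measure.bind_smul,
      Measure.smul_apply, smul_eq_mul]
  have hcomparison : c₁ * c₂ * (β₁.bind (P (n₀ + m))) E ≤ c₁ * e * t := by
    have hA2' (x : S) (hx : x ∈ E) := hA2 x hx m
    have hle₁ : c₂ * (β₁.bind (P (n₀ + m))) E ≤ t * (β₁.bind (P n₀)) E :=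
      hP.mul_bind_add_apply_le hE hPE hA2' β₁
    have hle₂ : c₂ * (β₁.bind (P (n₀ + m))) E ≤ t * (β₂.bind (P n₀)) E :=
      hβ ▸ hP.mul_bind_add_apply_le hE hPE hA2' β₂
    have hmin := min_mul_mul_left t _ _ ▸ le_min hle₁ hle₂
    calc _ = c₁ * (c₂ * (β₁.bind (P (n₀ + m))) E) := mul_assoc _ _ _
      _ ≤ c₁ * (t * e) := by gcongr
      _ = c₁ * e * t := by ring
  have hcommon : c₁ * e * t ≠ ⊤ :=
    ne_top_of_le_ne_top (measure_ne_top _ E) (le_self_add.trans_eq (hmass β₁ _ h₁).symm)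
  refine ⟨(c₁ * e) • ν, _, _, inferInstance, inferInstance, h₁, h₂,
    (ENNReal.add_right_inj hcommon).1 ((hmass β₁ _ h₁).symm.trans (hβ.trans (hmass β₂ _ h₂))),
    ENNReal.le_one_sub_mul_of_eq_add (hmass β₁ _ h₁) hcomparison (measure_ne_top _ E)⟩

lemma exists_coupling (hP : IsMarkovSemigroup P) (hE : MeasurableSet E)
    (hPE : ∀ n x, x ∉ E → P n x E = 0) [IsFiniteMeasure ν]
    (hA1 : Minorization P E ν c₁ n₀) (hA2 : SurvivalComparison P E ν c₂)
    (m j : ℕ) (β₁ β₂ : Measure S) [IsFiniteMeasure β₁] [IsFiniteMeasure β₂]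
    (hβ : (β₁.bind (P (j * n₀ + m))) E = (β₂.bind (P (j * n₀ + m))) E) :
    ∃ ρ β₁' β₂' : Measure S,
      β₁.bind (P (j * n₀)) = ρ + β₁' ∧ β₂.bind (P (j * n₀)) = ρ + β₂' ∧
      (β₁'.bind (P m)) E = (β₂'.bind (P m)) E ∧
      (β₁'.bind (P m)) E ≤ (1 - c₁ * c₂) ^ j * (β₁.bind (P (j * n₀ + m))) E := by
  induction j generalizing β₁ β₂ with
  | zero =>
    simp only [zero_mul, zero_add, pow_zero, one_mul] at hβ ⊢
    exact ⟨0, β₁, β₂, by rw [hP.bind_zero, zero_add], by rw [hP.bind_zero, zero_add], hβ, le_rfl⟩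
  | succ j ih =>
    rw [show (j + 1) * n₀ = n₀ + j * n₀ by ring, add_assoc] at hβ ⊢
    obtain ⟨ρ, η₁, η₂, _, _, h₁, h₂, hη, hη_le⟩ :=
      hP.exists_coupling_step hE hPE hA1 hA2 (j * n₀ + m) β₁ β₂ hβ
    obtain ⟨ρ', β₁', β₂', h₁', h₂', hβ', hβ'_le⟩ := ih η₁ η₂ hη
    have := hP.isFiniteMeasure_bind β₁ n₀
    have := hP.isFiniteMeasure_bind β₂ n₀
    refine ⟨ρ.bind (P (j * n₀)) + ρ', β₁', β₂', ?_, ?_, hβ', ?_⟩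
    · rw [hP.bind_add, hP.bind_eq_add_of_eq_add h₁, h₁', add_assoc]
    · rw [hP.bind_add, hP.bind_eq_add_of_eq_add h₂, h₂', add_assoc]
    calc _ ≤ (1 - c₁ * c₂) ^ j * (η₁.bind (P (j * n₀ + m))) E := hβ'_le
      _ ≤ (1 - c₁ * c₂) ^ j * ((1 - c₁ * c₂) * (β₁.bind (P (n₀ + (j * n₀ + m)))) E) := by
        gcongr
      _ = _ := by rw [pow_succ, mul_assoc]

lemma exists_common_part (hP : IsMarkovSemigroup P) (hE : MeasurableSet E)
    (hPE : ∀ n x, x ∉ E → P n x E = 0) [IsFiniteMeasure ν]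
    (hA1 : Minorization P E ν c₁ n₀) (hA2 : SurvivalComparison P E ν c₂)
    (μ₁ μ₂ : Measure S) [IsFiniteMeasure μ₁] [IsFiniteMeasure μ₂] (n : ℕ)
    (h₁ : (μ₁.bind (P n)) E ≠ 0) (h₂ : (μ₂.bind (P n)) E ≠ 0) :
    ∃ ρ β₁ β₂ : Measure S,
      ((μ₁.bind (P n)) E)⁻¹ • μ₁.bind (P n) = ρ + β₁ ∧
      ((μ₂.bind (P n)) E)⁻¹ • μ₂.bind (P n) = ρ + β₂ ∧
      β₁ E ≤ (1 - c₁ * c₂) ^ (n / n₀) ∧ β₂ E ≤ (1 - c₁ * c₂) ^ (n / n₀) := by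
  -- restart at time `n % n₀`, normalised to survival mass `1` up to time `n`
  have hrestart (μ : Measure S) [IsFiniteMeasure μ] :
      (((μ.bind (P n)) E)⁻¹ • μ.bind (P (n % n₀))).bind (P (n / n₀ * n₀)) =
        ((μ.bind (P n)) E)⁻¹ • μ.bind (P n) := by
    rw [Measure.bind_smul, ← hP.bind_add, Nat.mod_add_div']
  have hmass (μ : Measure S) [IsFiniteMeasure μ] (hμ : (μ.bind (P n)) E ≠ 0) :
      ((((μ.bind (P n)) E)⁻¹ • μ.bind (P (n % n₀))).bind (P (n / n₀ * n₀ + 0))) E = 1 := by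
    have := hP.isFiniteMeasure_bind μ n
    rw [add_zero, hrestart, Measure.smul_apply, smul_eq_mul,
      ENNReal.inv_mul_cancel hμ (measure_ne_top _ _)]
  have := hP.isFiniteMeasure_bind μ₁ (n % n₀)
  have := hP.isFiniteMeasure_bind μ₂ (n % n₀)
  have := Measure.smul_finite (μ₁.bind (P (n % n₀))) (ENNReal.inv_ne_top.2 h₁)
  have := Measure.smul_finite (μ₂.bind (P (n % n₀))) (ENNReal.inv_ne_top.2 h₂)
  obtain ⟨ρ, β₁, β₂, hβ₁, hβ₂, hβ, hβ_le⟩ := hP.exists_coupling hE hPE hA1 hA2 0 (n / n₀) _ _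
    ((hmass μ₁ h₁).trans (hmass μ₂ h₂).symm)
  rw [hmass μ₁ h₁, mul_one, hP.bind_zero] at hβ_le
  rw [hP.bind_zero, hP.bind_zero] at hβ
  exact ⟨ρ, β₁, β₂, (hrestart μ₁).symm.trans hβ₁, (hrestart μ₂).symm.trans hβ₂, hβ_le,
    hβ ▸ hβ_le⟩

lemma abs_toReal_conditioned_sub_le (hP : IsMarkovSemigroup P) (hE : MeasurableSet E)
    (hPE : ∀ n x, x ∉ E → P n x E = 0) [IsFiniteMeasure ν]
    (hA1 : Minorization P E ν c₁ n₀) (hA2 : SurvivalComparison P E ν c₂)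
    (μ₁ μ₂ : Measure S) [IsFiniteMeasure μ₁] [IsFiniteMeasure μ₂] (n : ℕ) (B : Set S)
    (h₁ : (μ₁.bind (P n)) E ≠ 0) (h₂ : (μ₂.bind (P n)) E ≠ 0) :
    |((μ₁.bind (P n)) (B ∩ E)).toReal / ((μ₁.bind (P n)) E).toReal -
      ((μ₂.bind (P n)) (B ∩ E)).toReal / ((μ₂.bind (P n)) E).toReal| ≤
      ((1 - c₁ * c₂) ^ (n / n₀)).toReal := by
  obtain ⟨ρ, β₁, β₂, hβ₁, hβ₂, hle₁, hle₂⟩ := hP.exists_common_part hE hPE hA1 hA2 μ₁ μ₂ n h₁ h₂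
  have hconditioned {μ β : Measure S} (h : ((μ.bind (P n)) E)⁻¹ • μ.bind (P n) = ρ + β) :
      (μ.bind (P n)) (B ∩ E) / (μ.bind (P n)) E = ρ (B ∩ E) + β (B ∩ E) := by
    rw [ENNReal.div_eq_inv_mul, ← smul_eq_mul, ← Measure.smul_apply, h, Measure.add_apply]
  have := hP.isFiniteMeasure_bind μ₁ n
  rw [← ENNReal.toReal_div, ← ENNReal.toReal_div]
  exact ENNReal.abs_toReal_sub_le_of_eq_add (hconditioned hβ₁) (hconditioned hβ₂)
    (ENNReal.div_ne_top (measure_ne_top _ _) h₁)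
    ((measure_mono Set.inter_subset_right).trans hle₁)
    ((measure_mono Set.inter_subset_right).trans hle₂)
    (ENNReal.pow_ne_top (ne_top_of_le_ne_top ENNReal.one_ne_top tsub_le_self))

lemma mul_le_one_of_minorization_of_survivalComparison (hP : IsMarkovSemigroup P)
    [IsProbabilityMeasure ν] {x₀ : S} (hx₀ : x₀ ∈ E) (hsurv : P n₀ x₀ E ≠ 0)
    (hA1 : Minorization P E ν c₁ n₀) (hA2 : SurvivalComparison P E ν c₂) :
    c₁ * c₂ ≤ 1 := by
  have := hP.isProbabilityMeasure n₀ x₀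
  have hc₁ := hA1 x₀ hx₀ Set.univ MeasurableSet.univ
  rw [measure_univ, mul_one, Set.univ_inter] at hc₁
  nth_rw 2 [← one_mul (P n₀ x₀ E)] at hc₁
  have hc₂ := hA2 x₀ hx₀ 0
  rw [hP.zero, Measure.dirac_apply_of_mem hx₀, mul_one, hP.bind_zero] at hc₂
  exact mul_le_one' ((ENNReal.mul_le_mul_iff_left hsurv (measure_ne_top _ _)).1 hc₁)
    (hc₂.trans prob_le_one)

end IsMarkovSemigroup

theorem stmt5_general {S : Type*} [MeasurableSpace S] [MeasurableSingletonClass S]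
    (cem : S) (K : S → Measure S) [∀ x, IsProbabilityMeasure (K x)]
    (law : ℕ → S → Measure S)
    (hlaw0 : ∀ x, law 0 x = Measure.dirac x)
    (hlawS : ∀ n x, law (n+1) x = (law n x).bind K)
    (habs : K cem = Measure.dirac cem)
    (n₀ : ℕ) (c₁ c₂ : ℝ) (hc₁ : 0 < c₁) (hc₂ : 0 < c₂)
    (ν : Measure S) [IsProbabilityMeasure ν] (hν : ν {cem} = 0)
    (hsurv : ∀ (n : ℕ) (μ : Measure S), IsProbabilityMeasure μ → μ {cem} = 0 →
      0 < (μ.bind (law n)) {cem}ᶜ)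
    (hA1 : ∀ x, x ≠ cem → ∀ B : Set S, MeasurableSet B →
      ENNReal.ofReal c₁ * ν B * (law n₀ x) {cem}ᶜ ≤ (law n₀ x) (B ∩ {cem}ᶜ))
    (hA2 : ∀ x, x ≠ cem → ∀ n : ℕ,
      ENNReal.ofReal c₂ * (law n x) {cem}ᶜ ≤ (ν.bind (law n)) {cem}ᶜ) :
    ∀ μ₁ μ₂ : Measure S, IsProbabilityMeasure μ₁ → IsProbabilityMeasure μ₂ →
      μ₁ {cem} = 0 → μ₂ {cem} = 0 → ∀ n : ℕ, n₀ ≤ n → ∀ B : Set S, MeasurableSet B →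
      |((μ₁.bind (law n)) (B ∩ {cem}ᶜ)).toReal / ((μ₁.bind (law n)) {cem}ᶜ).toReal -
        ((μ₂.bind (law n)) (B ∩ {cem}ᶜ)).toReal / ((μ₂.bind (law n)) {cem}ᶜ).toReal| ≤
      2 * (1 - c₁*c₂) ^ (n / n₀) := by
  intro μ₁ μ₂ _ _ hμ₁ hμ₂ n _ B _
  have hP := isMarkovSemigroup_of_survival K law hlaw0 hlawS hsurv
  have hPE (m : ℕ) (x : S) (hx : x ∉ ({cem}ᶜ : Set S)) : law m x {cem}ᶜ = 0 := by
    rw [Set.notMem_compl_iff.1 hx, eq_dirac_of_absorbing K law hlaw0 hlawS habs]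
    simp
  obtain ⟨x₀, hx₀⟩ : ({cem}ᶜ : Set S).Nonempty := nonempty_of_measure_ne_zero (μ := ν) (by
    simp [prob_compl_eq_one_sub (measurableSet_singleton cem), hν])
  have hx₀_surv : law n₀ x₀ {cem}ᶜ ≠ 0 := by
    simpa [Measure.dirac_bind'] using
      (hsurv n₀ (Measure.dirac x₀) inferInstance (by simpa using hx₀)).ne'
  have hc : c₁ * c₂ ≤ 1 := by
    rw [← ENNReal.ofReal_le_one, ENNReal.ofReal_mul hc₁.le]
    exact hP.mul_le_one_of_minorization_of_survivalComparison hx₀ hx₀_surv hA1 hA2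
  have hrate : 0 ≤ 1 - c₁ * c₂ := sub_nonneg.2 hc
  calc _ ≤ ((1 - ENNReal.ofReal c₁ * ENNReal.ofReal c₂) ^ (n / n₀)).toReal :=
        hP.abs_toReal_conditioned_sub_le (measurableSet_singleton cem).compl hPE hA1 hA2
          μ₁ μ₂ n B (hsurv n μ₁ inferInstance hμ₁).ne' (hsurv n μ₂ inferInstance hμ₂).ne'
    _ = (1 - c₁ * c₂) ^ (n / n₀) := by
      rw [← ENNReal.ofReal_mul hc₁.le, ← ENNReal.ofReal_one, ← ENNReal.ofReal_sub _ (by positivity),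
        ← ENNReal.ofReal_pow hrate, ENNReal.toReal_ofReal (pow_nonneg hrate _)]
    _ ≤ 2 * (1 - c₁ * c₂) ^ (n / n₀) := by linarith [pow_nonneg hrate (n / n₀)]

/-- Champagnat–Villemonais criterion for a discrete-time absorbed Markov chain.
The chain has transition law `K`, absorbed at the cemetery point `cem` (so survival up to
time `n` is the event `X_n ≠ cem`, and `law n x` is the law of `X_n` starting from `x`).
Under the minorization condition (A1) and the survival-comparison condition (A2), for any
two initial distributions `μ₁, μ₂` supported on the survival set and any `n ≥ n₀`, the
conditioned laws at time `n` are within total variation `2(1 − c₁c₂)^{⌊n/n₀⌋}`. -/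
theorem stmt5 {S : Type*} [MeasurableSpace S] [MeasurableSingletonClass S]
    (cem : S) (K : S → Measure S) [∀ x, IsProbabilityMeasure (K x)]
    (law : ℕ → S → Measure S)
    (hlaw0 : ∀ x, law 0 x = Measure.dirac x)
    (hlawS : ∀ n x, law (n+1) x = (law n x).bind K)
    (habs : K cem = Measure.dirac cem)
    (n₀ : ℕ) (hn₀ : 0 < n₀) (c₁ c₂ : ℝ) (hc₁ : 0 < c₁) (hc₂ : 0 < c₂)
    (ν : Measure S) [IsProbabilityMeasure ν] (hν : ν {cem} = 0)
    (hsurv : ∀ (n : ℕ) (μ : Measure S), IsProbabilityMeasure μ → μ {cem} = 0 →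
      0 < (μ.bind (law n)) {cem}ᶜ)
    (hA1 : ∀ x, x ≠ cem → ∀ B : Set S, MeasurableSet B →
      ENNReal.ofReal c₁ * ν B * (law n₀ x) {cem}ᶜ ≤ (law n₀ x) (B ∩ {cem}ᶜ))
    (hA2 : ∀ x, x ≠ cem → ∀ n : ℕ,
      ENNReal.ofReal c₂ * (law n x) {cem}ᶜ ≤ (ν.bind (law n)) {cem}ᶜ) :
    ∀ μ₁ μ₂ : Measure S, IsProbabilityMeasure μ₁ → IsProbabilityMeasure μ₂ →
      μ₁ {cem} = 0 → μ₂ {cem} = 0 → ∀ n : ℕ, n₀ ≤ n → ∀ B : Set S, MeasurableSet B →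
      |((μ₁.bind (law n)) (B ∩ {cem}ᶜ)).toReal / ((μ₁.bind (law n)) {cem}ᶜ).toReal -
        ((μ₂.bind (law n)) (B ∩ {cem}ᶜ)).toReal / ((μ₂.bind (law n)) {cem}ᶜ).toReal| ≤
      2 * (1 - c₁*c₂) ^ (n / n₀) :=
  stmt5_general cem K law hlaw0 hlawS habs n₀ c₁ c₂ hc₁ hc₂ ν hν hsurv hA1 hA2
end

section
/- Let X be a process with continuous paths on [0,∞) taking values in ℝ, let h : [0,∞) → [0,∞) be continuous decreasing with h(t) → 0, and define τ_{h∘θ_s} = inf{t ≥ 0 : X_t ≤ h(t+s)} and τ_0 = inf{t ≥ 0 : X_t ≤ 0}. Then almost surely (pathwise, whenever τ_0 < ∞ and the path is continuous) τ_{h∘θ_s} → τ_0 as s → ∞. -/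
open Filter

/-- Pathwise convergence of hitting times of decreasing moving barriers: if `X` is a
continuous path, `h` is a continuous decreasing nonnegative barrier with `h(t) → 0`, and
the path hits level `0` (`τ_0 < ∞`), then the hitting times of the shifted barriers,
`τ_{h∘θ_s} = inf{t ≥ 0 : X_t ≤ h(t+s)}`, converge to `τ_0 = inf{t ≥ 0 : X_t ≤ 0}` as
`s → ∞`. -/
theorem stmt16 (X h : ℝ → ℝ) (hX : Continuous X) (hh : Continuous h)
    (hanti : StrictAnti h) (hpos : ∀ t, 0 ≤ h t) (hlim : Tendsto h atTop (nhds 0))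
    (hhit : ∃ t : ℝ, 0 ≤ t ∧ X t ≤ 0) :
    Tendsto (fun s : ℝ => sInf {t : ℝ | 0 ≤ t ∧ X t ≤ h (t + s)}) atTop
      (nhds (sInf {t : ℝ | 0 ≤ t ∧ X t ≤ 0})) := by
  set A : Set ℝ := {t : ℝ | 0 ≤ t ∧ X t ≤ 0} with hA
  have hAne : A.Nonempty := hhit
  have hAbdd : BddBelow A := ⟨0, fun t ht => ht.1⟩
  have hAclosed : IsClosed A :=
    (isClosed_le continuous_const continuous_id).inter (isClosed_le hX continuous_const)
  have hτmem : sInf A ∈ A := hAclosed.csInf_mem hAne hAbdd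
  set τ := sInf A with hτ
  have hub : ∀ s : ℝ, sInf {t : ℝ | 0 ≤ t ∧ X t ≤ h (t + s)} ≤ τ := by
    intro s
    exact csInf_le ⟨0, fun t ht => ht.1⟩ ⟨hτmem.1, hτmem.2.trans (hpos _)⟩
  have hlb0 : ∀ s : ℝ, 0 ≤ sInf {t : ℝ | 0 ≤ t ∧ X t ≤ h (t + s)} := by
    intro s
    exact le_csInf ⟨τ, hτmem.1, hτmem.2.trans (hpos _)⟩ fun t ht => ht.1
  rw [Metric.tendsto_nhds]
  intro ε hε
  have key : ∀ᶠ s in atTop, τ - ε / 2 ≤ sInf {t : ℝ | 0 ≤ t ∧ X t ≤ h (t + s)} := by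
    rcases le_or_gt (τ - ε / 2) 0 with hc | hc
    · exact Eventually.of_forall fun s => hc.trans (hlb0 s)
    · have hK : ∀ t ∈ Set.Icc (0 : ℝ) (τ - ε / 2), 0 < X t := by
        intro t ht
        by_contra hcon
        push_neg at hcon
        have : τ ≤ t := csInf_le hAbdd ⟨ht.1, hcon⟩
        linarith [ht.2]
      obtain ⟨t0, ht0, hmin⟩ := (isCompact_Icc (a := (0 : ℝ)) (b := τ - ε / 2)).exists_isMinOn
        (Set.nonempty_Icc.2 hc.le) hX.continuousOn
      have hm : 0 < X t0 := hK t0 ht0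
      have hev : ∀ᶠ s in atTop, h s < X t0 := hlim.eventually (eventually_lt_nhds hm)
      filter_upwards [hev] with s hs
      refine le_csInf ⟨τ, hτmem.1, hτmem.2.trans (hpos _)⟩ fun t ht => ?_
      by_contra hcon
      push_neg at hcon
      have htK : t ∈ Set.Icc (0 : ℝ) (τ - ε / 2) := ⟨ht.1, hcon.le⟩
      have h1 : X t0 ≤ X t := hmin htK
      have h2 : h (t + s) ≤ h s := hanti.antitone (by linarith [ht.1])
      linarith [ht.2]
  filter_upwards [key] with s hs
  have h3 := hub s
  rw [Real.dist_eq, abs_lt]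
  constructor <;> linarith
end

section
/- Suppose for all s ≥ 0 and all pairs of probability measures μ₁, μ₂ on E_s, ‖P_{μ₁}(X_t ∈ · | τ_{A∘θ_s} > t) − P_{μ₂}(X_t ∈ · | τ_{A∘θ_s} > t)‖_TV → 0 as t → ∞. Then for any measurable B, the functions F_sup(s) := limsup_{t→∞} P_μ(X_t ∈ B | τ_{A∘θ_s} > t) and F_inf(s) := liminf_{t→∞} P_μ(X_t ∈ B | τ_{A∘θ_s} > t) do not depend on μ ∈ M₁(E_s); moreover, using the Markov property P_μ(X_{t+u} ∈ B | τ_{A∘θ_s} > t+u) = P_{μ_u}(X_t ∈ B | τ_{A∘θ_{s+u}} > t) with μ_u = P_μ(X_u ∈ · | τ_{A∘θ_s} > u), F_sup and F_inf do not depend on s either. -/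
open MeasureTheory Filter
open scoped ENNReal

/-- The event (in path space) that the path avoids the moving boundary `(A_{v+s})_v`
up to time `u`, i.e. `{τ_{A∘θ_s} > u}`. -/
def SurvSet {E : Type*} (A : ℝ → Set E) (s u : ℝ) : Set (ℝ → E) :=
  {ω | ∀ v : ℝ, 0 ≤ v → v ≤ u → ω v ∉ A (v + s)}

/-- The conditioned probability `P_μ(X_t ∈ B | τ_{A∘θ_s} > t)`. -/
noncomputable def condProb {E : Type*} [MeasurableSpace E]
    (P : E → Measure (ℝ → E)) (A : ℝ → Set E) (μ : Measure E) (s t : ℝ) (B : Set E) : ℝ :=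
  ((∫⁻ x, P x ({ω : ℝ → E | ω t ∈ B} ∩ SurvSet A s t) ∂μ) /
    (∫⁻ x, P x (SurvSet A s t) ∂μ)).toReal

/-- A conditioned probability always lies in `[0,1]`. -/
lemma condProb_mem_Icc {E : Type*} [MeasurableSpace E]
    (P : E → Measure (ℝ → E)) (A : ℝ → Set E) (μ : Measure E) (s t : ℝ) (B : Set E) :
    condProb P A μ s t B ∈ Set.Icc (0 : ℝ) 1 := by
  refine ⟨ENNReal.toReal_nonneg, ?_⟩
  have hnum : (∫⁻ x, P x ({ω : ℝ → E | ω t ∈ B} ∩ SurvSet A s t) ∂μ) ≤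
      ∫⁻ x, P x (SurvSet A s t) ∂μ :=
    lintegral_mono fun x => measure_mono Set.inter_subset_right
  have hdiv : (∫⁻ x, P x ({ω : ℝ → E | ω t ∈ B} ∩ SurvSet A s t) ∂μ) /
      (∫⁻ x, P x (SurvSet A s t) ∂μ) ≤ 1 :=
    ENNReal.div_le_of_le_mul (by simpa using hnum)
  calc (condProb P A μ s t B) ≤ (1 : ℝ≥0∞).toReal :=
        ENNReal.toReal_mono ENNReal.one_ne_top hdiv
    _ = 1 := by simp

/-- Shift invariance of `limsup` along `atTop` on `ℝ`. -/
lemma limsup_shift (f : ℝ → ℝ) (u : ℝ) :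
    Filter.limsup (fun t : ℝ => f (t + u)) atTop = Filter.limsup f atTop := by
  have hmap : map (fun t : ℝ => t + u) atTop = (atTop : Filter ℝ) :=
    (OrderIso.addRight u).map_atTop
  simp only [Filter.limsup]
  conv_rhs => rw [← hmap, map_map]
  rfl

/-- Shift invariance of `liminf` along `atTop` on `ℝ`. -/
lemma liminf_shift (f : ℝ → ℝ) (u : ℝ) :
    Filter.liminf (fun t : ℝ => f (t + u)) atTop = Filter.liminf f atTop := by
  have hmap : map (fun t : ℝ => t + u) atTop = (atTop : Filter ℝ) :=
    (OrderIso.addRight u).map_atTop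
  simp only [Filter.liminf]
  conv_rhs => rw [← hmap, map_map]
  rfl

/-- `limsup` comparison for `[0,1]`-valued functions whose difference tends to `0`. -/
lemma limsup_le_of_tendsto_sub {f g : ℝ → ℝ}
    (hf : ∀ t, f t ∈ Set.Icc (0 : ℝ) 1) (hg : ∀ t, g t ∈ Set.Icc (0 : ℝ) 1)
    (h : Tendsto (fun t => f t - g t) atTop (nhds 0)) :
    Filter.limsup f atTop ≤ Filter.limsup g atTop := by
  refine le_of_forall_pos_le_add fun ε hε => ?_
  have hev : ∀ᶠ t in atTop, f t ≤ g t + ε := by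
    filter_upwards [Metric.tendsto_nhds.1 h ε hε] with t ht
    rw [Real.dist_eq, sub_zero] at ht
    have := (abs_lt.1 ht).2
    linarith
  have hbf' : IsBoundedUnder (· ≥ ·) atTop f := isBoundedUnder_of ⟨0, fun t => (hf t).1⟩
  have hbg : IsBoundedUnder (· ≤ ·) atTop g := isBoundedUnder_of ⟨1, fun t => (hg t).2⟩
  have hbg' : IsBoundedUnder (· ≥ ·) atTop g := isBoundedUnder_of ⟨0, fun t => (hg t).1⟩
  have h1 : Filter.limsup f atTop ≤ Filter.limsup (fun t => g t + ε) atTop :=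
    limsup_le_limsup hev hbf'.isCoboundedUnder_le
      (isBoundedUnder_of ⟨1 + ε, fun t => by linarith [(hg t).2]⟩)
  have h2 : Filter.limsup (fun t => g t + ε) atTop = Filter.limsup g atTop + ε :=
    limsup_add_const atTop g ε hbg hbg'.isCoboundedUnder_le
  calc Filter.limsup f atTop ≤ Filter.limsup g atTop + ε := h2 ▸ h1

/-- `liminf` comparison for `[0,1]`-valued functions whose difference tends to `0`. -/
lemma liminf_le_of_tendsto_sub {f g : ℝ → ℝ}
    (hf : ∀ t, f t ∈ Set.Icc (0 : ℝ) 1) (hg : ∀ t, g t ∈ Set.Icc (0 : ℝ) 1)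
    (h : Tendsto (fun t => f t - g t) atTop (nhds 0)) :
    Filter.liminf f atTop ≤ Filter.liminf g atTop := by
  refine le_of_forall_pos_le_add fun ε hε => ?_
  have hev : ∀ᶠ t in atTop, f t ≤ g t + ε := by
    filter_upwards [Metric.tendsto_nhds.1 h ε hε] with t ht
    rw [Real.dist_eq, sub_zero] at ht
    have := (abs_lt.1 ht).2
    linarith
  have hbf' : IsBoundedUnder (· ≥ ·) atTop f := isBoundedUnder_of ⟨0, fun t => (hf t).1⟩
  have hbg : IsBoundedUnder (· ≤ ·) atTop g := isBoundedUnder_of ⟨1, fun t => (hg t).2⟩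
  have hbg' : IsBoundedUnder (· ≥ ·) atTop g := isBoundedUnder_of ⟨0, fun t => (hg t).1⟩
  have h1 : Filter.liminf f atTop ≤ Filter.liminf (fun t => g t + ε) atTop :=
    liminf_le_liminf hev hbf'
      ((isBoundedUnder_of ⟨1 + ε, fun t => by linarith [(hg t).2]⟩
        : IsBoundedUnder (· ≤ ·) atTop (fun t => g t + ε)).isCoboundedUnder_ge)
  have h2 : Filter.liminf (fun t => g t + ε) atTop = Filter.liminf g atTop + ε :=
    liminf_add_const atTop g ε hbg.isCoboundedUnder_ge hbg'
  calc Filter.liminf f atTop ≤ Filter.liminf g atTop + ε := h2 ▸ h1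

/-- If two `[0,1]`-valued functions merge at `+∞`, they have the same `limsup` and
`liminf`. -/
lemma limsup_liminf_eq_of_tendsto_sub {f g : ℝ → ℝ}
    (hf : ∀ t, f t ∈ Set.Icc (0 : ℝ) 1) (hg : ∀ t, g t ∈ Set.Icc (0 : ℝ) 1)
    (h : Tendsto (fun t => f t - g t) atTop (nhds 0)) :
    Filter.limsup f atTop = Filter.limsup g atTop ∧
      Filter.liminf f atTop = Filter.liminf g atTop := by
  have h' : Tendsto (fun t => g t - f t) atTop (nhds 0) := by
    have := h.neg
    simp only [neg_sub, neg_zero] at this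
    exact this
  exact ⟨le_antisymm (limsup_le_of_tendsto_sub hf hg h) (limsup_le_of_tendsto_sub hg hf h'),
    le_antisymm (liminf_le_of_tendsto_sub hf hg h) (liminf_le_of_tendsto_sub hg hf h')⟩

/-- If the conditioned laws starting from any two initial distributions merge in total
variation as `t → ∞` (hypothesis `hmix`), then, using the Markov property (hypothesis
`hMarkov`: `P_μ(X_{t+u} ∈ B | τ_{A∘θ_s} > t+u) = P_{μ_u}(X_t ∈ B | τ_{A∘θ_{s+u}} > t)`
for some probability measure `μ_u` on `E_{s+u}`), the `limsup` and `liminf` as `t → ∞`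
of `P_μ(X_t ∈ B | τ_{A∘θ_s} > t)` depend neither on `μ` nor on `s`. -/
theorem stmt17 {E : Type*} [MeasurableSpace E] (A : ℝ → Set E)
    (P : E → Measure (ℝ → E)) [∀ x, IsProbabilityMeasure (P x)]
    (hmix : ∀ s : ℝ, 0 ≤ s → ∀ μ₁ μ₂ : Measure E,
      IsProbabilityMeasure μ₁ → IsProbabilityMeasure μ₂ → μ₁ (A s) = 0 → μ₂ (A s) = 0 →
      Tendsto (fun t : ℝ => sSup {d : ℝ | ∃ B : Set E, MeasurableSet B ∧
          d = |condProb P A μ₁ s t B - condProb P A μ₂ s t B|}) atTop (nhds 0))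
    (hMarkov : ∀ s u : ℝ, 0 ≤ s → 0 ≤ u → ∀ μ : Measure E,
      IsProbabilityMeasure μ → μ (A s) = 0 →
      ∃ ν : Measure E, IsProbabilityMeasure ν ∧ ν (A (s + u)) = 0 ∧
        ∀ t : ℝ, 0 ≤ t → ∀ B : Set E,
          condProb P A μ s (t + u) B = condProb P A ν (s + u) t B) :
    ∀ B : Set E, MeasurableSet B → ∀ s s' : ℝ, 0 ≤ s → 0 ≤ s' →
      ∀ μ μ' : Measure E, IsProbabilityMeasure μ → IsProbabilityMeasure μ' →
        μ (A s) = 0 → μ' (A s') = 0 →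
        (Filter.limsup (fun t : ℝ => condProb P A μ s t B) atTop =
            Filter.limsup (fun t : ℝ => condProb P A μ' s' t B) atTop) ∧
        (Filter.liminf (fun t : ℝ => condProb P A μ s t B) atTop =
            Filter.liminf (fun t : ℝ => condProb P A μ' s' t B) atTop) := by
  intro B hB
  -- Step 1: for a fixed starting time `s`, the limsup/liminf do not depend on `μ`.
  have step1 : ∀ s : ℝ, 0 ≤ s → ∀ μ₁ μ₂ : Measure E, IsProbabilityMeasure μ₁ →
      IsProbabilityMeasure μ₂ → μ₁ (A s) = 0 → μ₂ (A s) = 0 →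
      (Filter.limsup (fun t : ℝ => condProb P A μ₁ s t B) atTop =
          Filter.limsup (fun t : ℝ => condProb P A μ₂ s t B) atTop) ∧
      (Filter.liminf (fun t : ℝ => condProb P A μ₁ s t B) atTop =
          Filter.liminf (fun t : ℝ => condProb P A μ₂ s t B) atTop) := by
    intro s hs μ₁ μ₂ h₁ h₂ h₁0 h₂0
    set S : ℝ → ℝ := fun t => sSup {d : ℝ | ∃ B : Set E, MeasurableSet B ∧
        d = |condProb P A μ₁ s t B - condProb P A μ₂ s t B|} with hS
    have hSt : Tendsto S atTop (nhds 0) := hmix s hs μ₁ μ₂ h₁ h₂ h₁0 h₂0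
    have habs : ∀ t, |condProb P A μ₁ s t B - condProb P A μ₂ s t B| ≤ S t := by
      intro t
      refine le_csSup ⟨1, ?_⟩ ⟨B, hB, rfl⟩
      rintro d ⟨B', _, rfl⟩
      have hx := condProb_mem_Icc P A μ₁ s t B'
      have hy := condProb_mem_Icc P A μ₂ s t B'
      rw [abs_le]
      constructor <;> [linarith [hx.1, hy.2]; linarith [hx.2, hy.1]]
    have hdiff : Tendsto (fun t => condProb P A μ₁ s t B - condProb P A μ₂ s t B)
        atTop (nhds 0) := by
      have hneg : Tendsto (fun t => -S t) atTop (nhds 0) := by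
        simpa using hSt.neg
      refine tendsto_of_tendsto_of_tendsto_of_le_of_le hneg hSt ?_ ?_
      · intro t
        have := (neg_abs_le (condProb P A μ₁ s t B - condProb P A μ₂ s t B))
        have h2 := neg_le_neg (habs t)
        dsimp only
        linarith
      · intro t
        exact (le_abs_self _).trans (habs t)
    exact limsup_liminf_eq_of_tendsto_sub
      (fun t => condProb_mem_Icc P A μ₁ s t B)
      (fun t => condProb_mem_Icc P A μ₂ s t B) hdiff
  -- Main argument for `s ≤ s'`.
  have main : ∀ s s' : ℝ, 0 ≤ s → s ≤ s' →
      ∀ μ μ' : Measure E, IsProbabilityMeasure μ → IsProbabilityMeasure μ' →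
        μ (A s) = 0 → μ' (A s') = 0 →
        (Filter.limsup (fun t : ℝ => condProb P A μ s t B) atTop =
            Filter.limsup (fun t : ℝ => condProb P A μ' s' t B) atTop) ∧
        (Filter.liminf (fun t : ℝ => condProb P A μ s t B) atTop =
            Filter.liminf (fun t : ℝ => condProb P A μ' s' t B) atTop) := by
    intro s s' hs hss' μ μ' hμ hμ' hμ0 hμ'0
    obtain ⟨ν, hν, hν0, hνeq⟩ := hMarkov s (s' - s) hs (by linarith) μ hμ hμ0
    have hsu : s + (s' - s) = s' := by ring
    rw [hsu] at hν0 hνeq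
    have heq : (fun t : ℝ => condProb P A μ s (t + (s' - s)) B) =ᶠ[atTop]
        (fun t : ℝ => condProb P A ν s' t B) :=
      eventually_atTop.2 ⟨0, fun t ht => hνeq t ht B⟩
    have hstep1 := step1 s' (le_trans hs hss') ν μ' hν hμ' hν0 hμ'0
    constructor
    · calc Filter.limsup (fun t : ℝ => condProb P A μ s t B) atTop
          = Filter.limsup (fun t : ℝ => condProb P A μ s (t + (s' - s)) B) atTop :=
            (limsup_shift (fun t => condProb P A μ s t B) (s' - s)).symm
        _ = Filter.limsup (fun t : ℝ => condProb P A ν s' t B) atTop := limsup_congr heq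
        _ = Filter.limsup (fun t : ℝ => condProb P A μ' s' t B) atTop := hstep1.1
    · calc Filter.liminf (fun t : ℝ => condProb P A μ s t B) atTop
          = Filter.liminf (fun t : ℝ => condProb P A μ s (t + (s' - s)) B) atTop :=
            (liminf_shift (fun t => condProb P A μ s t B) (s' - s)).symm
        _ = Filter.liminf (fun t : ℝ => condProb P A ν s' t B) atTop := liminf_congr heq
        _ = Filter.liminf (fun t : ℝ => condProb P A μ' s' t B) atTop := hstep1.2
  intro s s' hs hs' μ μ' hμ hμ' hμ0 hμ'0
  rcases le_total s s' with h | h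
  · exact main s s' hs h μ μ' hμ hμ' hμ0 hμ'0
  · obtain ⟨h1, h2⟩ := main s' s hs' h μ' μ hμ' hμ hμ'0 hμ0
    exact ⟨h1.symm, h2.symm⟩
end
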